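/- arXiv:1010.0133 — 4 statements merged into one kernel-verified Lean document; each statement's English description precedes it below -/
import Mathlib

section
/- Let m ≥ 1 and let t ≥ 3 be an odd integer. Let c_1,…,c_t ∈ [m] be colors with c_{i+1} ≠ c_i for i = 1,…,t−1 and c_1 ≠ c_t. Then the element α = x_{c_t,c_2} · x_{c_1,c_3} · x_{c_2,c_4} ⋯ x_{c_{t−2},c_t} · x_{c_{t−1},c_1} (i.e., the product over i = 1,…,t of x_{c_{i−1},c_{i+1}}, indices taken modulo t) is not the identity element of the semi-free group Γ_{KG(m,2)}. -/
/-- The semi-free group (right-angled Artin group) of a simple graph `H`: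
generators are the vertices of `H`, with relations `x*y = y*x` for each edge `xy`. -/
def semifreeRels {V : Type} (H : SimpleGraph V) : Set (FreeGroup V) :=
  {r | ∃ x y : V, H.Adj x y ∧
    r = FreeGroup.of x * FreeGroup.of y * (FreeGroup.of x)⁻¹ * (FreeGroup.of y)⁻¹}

/-- The semi-free group `Γ_H` of a simple graph `H`. -/
abbrev SemifreeGroup {V : Type} (H : SimpleGraph V) : Type :=
  PresentedGroup (semifreeRels H)

/-- The Kneser graph `KG(m,2)`: vertices are the 2-element subsets of `[m]`
(modelled as `Fin m`), adjacent iff disjoint. -/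
def kneser (m : ℕ) : SimpleGraph {s : Finset (Fin m) // s.card = 2} where
  Adj s t := Disjoint s.1 t.1
  symm := ⟨fun _ _ h => h.symm⟩
  loopless := ⟨fun s h => by
    have hs : s.1 = ∅ := disjoint_self.mp h
    have := s.2
    rw [hs] at this
    simp at this⟩

/-- The element `x_{i,j}` of the semi-free group `Γ_{KG(m,2)}`: the identity if `i = j`,
the generator `{i,j}` if `i < j`, and its inverse if `j < i`. -/
def xgen (m : ℕ) (i j : Fin m) : SemifreeGroup (kneser m) :=
  if h : i = j then 1
  else if i < j then PresentedGroup.of ⟨({i, j} : Finset (Fin m)), Finset.card_pair h⟩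
  else (PresentedGroup.of ⟨({i, j} : Finset (Fin m)), Finset.card_pair h⟩)⁻¹

/-!
Sending each generator `{i, j}` of `Γ_{KG(m,2)}` to the transposition `(i j)` defines a
homomorphism to `Sym(m)`, because transpositions of disjoint pairs commute. The image of the
product is `∏ₖ (c_k c_{k+2})`. Applied to `c_1 = c_{t+1}`, the rightmost factor moves it to
`c_{t-1}`, the next one fixes it (consecutive colours differ), the next moves it to `c_{t-3}`,
and so on; since `t` is odd the chain ends at `c_0 ≠ c_1`, so the product is not trivial.
-/

namespace SemifreeGroup

variable {V G : Type} [Group G] {H : SimpleGraph V}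

def lift (f : V → G) (hf : ∀ x y, H.Adj x y → Commute (f x) (f y)) : SemifreeGroup H →* G :=
  PresentedGroup.toGroup (f := f) <| by
    rintro r ⟨x, y, hxy, rfl⟩
    rw [← commutatorElement_def, map_commutatorElement, FreeGroup.lift_apply_of,
      FreeGroup.lift_apply_of]
    exact commutatorElement_eq_one_iff_commute.mpr (hf x y hxy)

@[simp]
theorem lift_of (f : V → G) (hf : ∀ x y, H.Adj x y → Commute (f x) (f y)) (x : V) :
    lift f hf (PresentedGroup.of x) = f x :=
  PresentedGroup.toGroup.of _

end SemifreeGroup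

section PairSwap

open Equiv

variable {α : Type*} [LinearOrder α]

def pairSwap (s : {s : Finset α // s.card = 2}) : Perm α :=
  have hs : s.1.Nonempty := Finset.card_pos.mp (by omega)
  swap (s.1.min' hs) (s.1.max' hs)

theorem pairSwap_pair {i j : α} (h : i ≠ j) :
    pairSwap ⟨{i, j}, Finset.card_pair h⟩ = swap i j := by
  rcases le_total i j with hij | hji
  · simp [pairSwap, hij]
  · simp [pairSwap, hji, swap_comm]

theorem pairSwap_apply_of_notMem {s : {s : Finset α // s.card = 2}} {x : α} (hx : x ∉ s.1) :
    pairSwap s x = x :=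
  swap_apply_of_ne_of_ne (ne_of_mem_of_not_mem (Finset.min'_mem _ _) hx).symm
    (ne_of_mem_of_not_mem (Finset.max'_mem _ _) hx).symm

theorem pairSwap_disjoint {s t : {s : Finset α // s.card = 2}} (h : Disjoint s.1 t.1) :
    (pairSwap s).Disjoint (pairSwap t) := fun x =>
  if hx : x ∈ s.1 then .inr (pairSwap_apply_of_notMem (Finset.disjoint_left.mp h hx))
  else .inl (pairSwap_apply_of_notMem hx)

end PairSwap

section SwapChain

open Equiv

variable {α : Type*} [DecidableEq α]

theorem prod_map_swap_range'_apply {c : ℕ → α} (hc : ∀ k, c (k + 1) ≠ c k) (k n : ℕ) :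
    ((List.range' k (2 * n + 1)).map fun j => swap (c j) (c (j + 2))).prod (c (k + 2 * n + 2)) =
      c k := by
  induction n generalizing k with
  | zero => simp
  | succ n ih =>
    rw [show 2 * (n + 1) + 1 = 2 * n + 1 + 1 + 1 by ring, List.range'_succ, List.range'_succ]
    simp only [List.map_cons, List.prod_cons, Perm.mul_apply]
    rw [show k + 2 * (n + 1) + 2 = k + 1 + 1 + 2 * n + 2 by ring, ih,
      swap_apply_of_ne_of_ne (hc _) (hc _).symm, swap_apply_right]

theorem prod_map_swap_range_apply_one {t : ℕ} (ht : Odd t) {c : ZMod t → α}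
    (hc : ∀ i : ZMod t, c (i + 1) ≠ c i) :
    ((List.range t).map fun k : ℕ => swap (c k) (c (k + 2))).prod (c 1) = c 0 := by
  obtain ⟨n, rfl⟩ := ht
  have hwrap : ((2 * n + 2 : ℕ) : ZMod (2 * n + 1)) = 1 := by
    rw [show 2 * n + 2 = 2 * n + 1 + 1 from rfl, Nat.cast_succ, ZMod.natCast_self, zero_add]
  have hchain := prod_map_swap_range'_apply (c := fun k : ℕ => c k)
    (fun k => by push_cast; exact hc k) 0 n
  rw [zero_add, hwrap, ← List.range_eq_range'] at hchain
  push_cast at hchain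
  exact hchain

end SwapChain

def kneserPerm (m : ℕ) : SemifreeGroup (kneser m) →* Equiv.Perm (Fin m) :=
  SemifreeGroup.lift pairSwap fun _ _ h => (pairSwap_disjoint h).commute

theorem kneserPerm_xgen {m : ℕ} (i j : Fin m) : kneserPerm m (xgen m i j) = Equiv.swap i j := by
  unfold xgen
  split_ifs with hij
  · simp [hij, Equiv.Perm.one_def]
  · simp [kneserPerm, pairSwap_pair hij]
  · simp [kneserPerm, pairSwap_pair hij]

theorem product_around_odd_cycle_ne_one_general (m t : ℕ)
    (htodd : Odd t) (c : ZMod t → Fin m)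
    (hc : ∀ i : ZMod t, c (i + 1) ≠ c i) :
    ((List.range t).map
        (fun k : ℕ => xgen m (c ((k : ZMod t))) (c ((k : ZMod t) + 2)))).prod ≠ 1 := by
  intro h
  have hperm : ((List.range t).map fun k : ℕ => Equiv.swap (c k) (c (k + 2))).prod = 1 := by
    simpa [map_list_prod, Function.comp_def, kneserPerm_xgen] using congrArg (kneserPerm m) h
  exact hc 0 (by rw [zero_add, ← prod_map_swap_range_apply_one htodd hc, hperm,
    Equiv.Perm.one_apply])

/-- **Lemma (non-vanishing of cyclic products in `Γ_{KG(m,2)}`).**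
Let `m ≥ 1` and let `t ≥ 3` be odd. Let `c₁,…,c_t ∈ [m]` (indexed cyclically, i.e. by
`ZMod t`) be colors with consecutive colors distinct. Then the product over `i = 1,…,t`
of `x_{c_{i-1}, c_{i+1}}` (indices mod `t`) is not the identity of `Γ_{KG(m,2)}`. -/
theorem product_around_odd_cycle_ne_one (m t : ℕ) (hm : 1 ≤ m) (ht : 3 ≤ t)
    (htodd : Odd t) (c : ZMod t → Fin m)
    (hc : ∀ i : ZMod t, c (i + 1) ≠ c i) :
    ((List.range t).map
        (fun k : ℕ => xgen m (c ((k : ZMod t))) (c ((k : ZMod t) + 2)))).prod ≠ 1 :=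
  product_around_odd_cycle_ne_one_general m t htodd c hc
end

section
/- If a graph G admits a local 3-coloring using at most 4 colors, then G has a proper coloring with at most 3 colors (i.e., χ(G) ≤ 3). Consequently, any graph with chromatic number greater than 3 requires at least 5 colors in any local 3-coloring. -/
/-!
Given a local `n`-coloring with `n + 1` colors, pick one color `d`. Every vertex of color `d`
sees fewer than `n` colors, so one of the `n` other colors is missing around it; recolor it with
that color. Vertices of color `d` are pairwise non-adjacent, so the recolorings never clash and
the result is a proper coloring with `n` colors.
-/

namespace SimpleGraph

variable {V α : Type*} {G : SimpleGraph V} {c : V → α}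

theorem colorable_card_of_forall_mem (hproper : ∀ u v, G.Adj u v → c u ≠ c v) {t : Finset α}
    (ht : ∀ v, c v ∈ t) : G.Colorable t.card := by
  simpa using (Coloring.mk (fun v => (⟨c v, ht v⟩ : t))
    fun huv hc => hproper _ _ huv (congrArg Subtype.val hc)).colorable

theorem colorable_card_erase_of_recolor [DecidableEq α] (hproper : ∀ u v, G.Adj u v → c u ≠ c v)
    {s : Finset α} (hcov : ∀ v, c v ∈ s) (d : α)
    (hfree : ∀ v, c v = d → ∃ x ∈ s.erase d, x ∉ c '' G.neighborSet v) :
    G.Colorable (s.erase d).card := by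
  choose r hr_mem hr_free using hfree
  let c' : V → α := fun v => if h : c v = d then r v h else c v
  have hmoved_ne {u v : V} (huv : G.Adj u v) (hu : c u = d) : r u hu ≠ c v :=
    fun h => hr_free u hu ⟨v, huv, h.symm⟩
  refine colorable_card_of_forall_mem (c := c') (fun u v huv => ?_) (fun v => ?_)
  · by_cases hu : c u = d <;> by_cases hv : c v = d <;> simp only [c', hu, hv, dite_true, dite_false]
    · exact absurd (hu.trans hv.symm) (hproper u v huv)
    · exact hmoved_ne huv hu
    · exact (hmoved_ne huv.symm hv).symm
    · exact hproper u v huv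
  · by_cases hv : c v = d
    · simpa only [c', hv, dite_true] using hr_mem v hv
    · simpa only [c', hv, dite_false] using Finset.mem_erase.mpr ⟨hv, hcov v⟩

theorem colorable_of_ncard_image_neighborSet_lt (hproper : ∀ u v, G.Adj u v → c u ≠ c v)
    {s : Finset α} (hcov : ∀ v, c v ∈ s) {n : ℕ} (hs : s.card ≤ n + 1)
    (hlocal : ∀ v, (c '' G.neighborSet v).ncard < n) : G.Colorable n := by
  classical
  rcases Nat.lt_or_eq_of_le hs with hlt | heq
  · exact (colorable_card_of_forall_mem hproper hcov).mono (Nat.le_of_lt_succ hlt)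
  obtain ⟨d, hd⟩ := (Finset.card_pos (s := s)).mp (by omega)
  have hcard : (s.erase d).card = n := by rw [Finset.card_erase_of_mem hd, heq, Nat.add_sub_cancel]
  rw [← hcard]
  refine colorable_card_erase_of_recolor hproper hcov d fun v _ => ?_
  refine Set.exists_mem_notMem_of_ncard_lt_ncard ?_ (s.finite_toSet.subset ?_)
  · rw [Set.ncard_coe_finset, hcard]
    exact hlocal v
  · rintro _ ⟨u, -, rfl⟩
    exact hcov u

end SimpleGraph

/-- If a graph admits a local `3`-coloring (a proper coloring in which at most two
colors appear on each neighborhood) using at most `4` colors, then it is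
`3`-colorable. Consequently, a graph with chromatic number greater than `3`
needs at least `5` colors in any local `3`-coloring. -/
theorem local_three_coloring_with_four_colors (V : Type) (G : SimpleGraph V)
    (α : Type) (c : V → α)
    (hproper : ∀ u v : V, G.Adj u v → c u ≠ c v)
    (hlocal : ∀ v : V, (c '' G.neighborSet v).ncard ≤ 2) :
    ((∃ s : Finset α, (∀ v : V, c v ∈ s) ∧ s.card ≤ 4) → G.Colorable 3) ∧
    (¬ G.Colorable 3 → ∀ s : Finset α, (∀ v : V, c v ∈ s) → 5 ≤ s.card) := by
  have four_colors : (∃ s : Finset α, (∀ v : V, c v ∈ s) ∧ s.card ≤ 4) → G.Colorable 3 :=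
    fun ⟨_, hcov, hs⟩ => SimpleGraph.colorable_of_ncard_image_neighborSet_lt hproper hcov hs
      fun v => Nat.lt_succ_of_le (hlocal v)
  refine ⟨four_colors, fun hG s hcov => ?_⟩
  by_contra! hs
  exact hG (four_colors ⟨s, hcov, by omega⟩)
end

section
/- Let m ≥ 3. An edge of U(m,3) joining vertices (i,A) and (j,B) is contained in a triangle of U(m,3) if and only if there exists k ∈ [m], distinct from i and j, such that A = {j,k} and B = {i,k}. Moreover, every triangle of U(m,3) has vertex set of the form {(i,{j,k}), (j,{i,k}), (k,{i,j})} for some distinct i,j,k ∈ [m]. -/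
/-- Vertices of the graph `U(m,r)`: pairs `(i, A)` with `i ∈ [m]`, `A ⊆ [m]`,
`i ∉ A` and `|A| = r - 1` (here `[m]` is modelled by `Fin m`). -/
abbrev UVert (m r : ℕ) : Type :=
  {p : Fin m × Finset (Fin m) // p.1 ∉ p.2 ∧ p.2.card = r - 1}

/-- The universal graph `U(m,r)` for local `r`-colorings with at most `m` colors:
`(i,A)` and `(j,B)` are adjacent iff `i ∈ B` and `j ∈ A`. -/
def Ugraph (m r : ℕ) : SimpleGraph (UVert m r) where
  Adj p q := p.1.1 ∈ q.1.2 ∧ q.1.1 ∈ p.1.2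
  symm := ⟨fun _ _ h => ⟨h.2, h.1⟩⟩
  loopless := ⟨fun p h => p.2.1 h.1⟩

/-- The natural coloring of `U(m,r)`, assigning color `i` to the vertex `(i,A)`. -/
def naturalColoring (m r : ℕ) : UVert m r → Fin m := fun p => p.1.1

/-- An edge of `U(m,3)` joining `(i,A)` and `(j,B)` is a *triangle edge* if for
some `k` distinct from `i` and `j` one has `A = {j,k}` and `B = {i,k}`. -/
def IsTriangleEdge (m : ℕ) (p q : UVert m 3) : Prop :=
  ∃ k : Fin m, k ≠ p.1.1 ∧ k ≠ q.1.1 ∧ p.1.1 ≠ q.1.1 ∧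
    p.1.2 = {q.1.1, k} ∧ q.1.2 = {p.1.1, k}

theorem Finset.eq_pair_of_card_eq_two {α : Type*} [DecidableEq α] {s : Finset α} {a b : α}
    (hab : a ≠ b) (ha : a ∈ s) (hb : b ∈ s) (hs : s.card = 2) : s = {a, b} :=
  (Finset.eq_of_subset_of_card_le (Finset.insert_subset ha (Finset.singleton_subset_iff.2 hb))
    (by rw [hs, Finset.card_pair hab])).symm

namespace Ugraph

variable {m r : ℕ}

theorem fst_ne_of_adj {p q : UVert m r} (h : (Ugraph m r).Adj p q) : p.1.1 ≠ q.1.1 :=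
  fun hpq => p.2.1 (hpq ▸ h.2)

theorem snd_eq_pair_of_adj {p q w : UVert m 3} (hpq : (Ugraph m 3).Adj p q)
    (hpw : (Ugraph m 3).Adj p w) (hqw : q.1.1 ≠ w.1.1) : p.1.2 = {q.1.1, w.1.1} :=
  Finset.eq_pair_of_card_eq_two hqw hpq.2 hpw.2 p.2.2

def triangleVertex {i j k : Fin m} (hij : i ≠ j) (hki : k ≠ i) (hkj : k ≠ j) : UVert m 3 :=
  ⟨(k, {i, j}), by simp [hki, hkj], Finset.card_pair hij⟩

theorem exists_common_neighbor_iff {p q : UVert m 3} (hpq : (Ugraph m 3).Adj p q) :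
    (∃ w : UVert m 3, (Ugraph m 3).Adj p w ∧ (Ugraph m 3).Adj q w) ↔
      ∃ k : Fin m, k ≠ p.1.1 ∧ k ≠ q.1.1 ∧ p.1.2 = {q.1.1, k} ∧ q.1.2 = {p.1.1, k} := by
  constructor
  · rintro ⟨w, hpw, hqw⟩
    exact ⟨w.1.1, (fst_ne_of_adj hpw).symm, (fst_ne_of_adj hqw).symm,
      snd_eq_pair_of_adj hpq hpw (fst_ne_of_adj hqw),
      snd_eq_pair_of_adj hpq.symm hqw (fst_ne_of_adj hpw)⟩
  · rintro ⟨k, hkp, hkq, hp, hq⟩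
    refine ⟨triangleVertex (fst_ne_of_adj hpq) hkp hkq, ⟨?_, ?_⟩, ?_, ?_⟩ <;>
      simp [triangleVertex, hp, hq]

theorem triangle_eq {p q w : UVert m 3} (hpq : (Ugraph m 3).Adj p q)
    (hqw : (Ugraph m 3).Adj q w) (hpw : (Ugraph m 3).Adj p w) :
    p.1 = (p.1.1, {q.1.1, w.1.1}) ∧ q.1 = (q.1.1, {p.1.1, w.1.1}) ∧
      w.1 = (w.1.1, {p.1.1, q.1.1}) :=
  ⟨Prod.ext rfl (snd_eq_pair_of_adj hpq hpw (fst_ne_of_adj hqw)),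
    Prod.ext rfl (snd_eq_pair_of_adj hpq.symm hqw (fst_ne_of_adj hpw)),
    Prod.ext rfl (snd_eq_pair_of_adj hpw.symm hqw.symm (fst_ne_of_adj hpq))⟩

end Ugraph

theorem triangle_edges_of_U_general (m : ℕ) :
    (∀ p q : UVert m 3, (Ugraph m 3).Adj p q →
      ((∃ w : UVert m 3, (Ugraph m 3).Adj p w ∧ (Ugraph m 3).Adj q w) ↔
        ∃ k : Fin m, k ≠ p.1.1 ∧ k ≠ q.1.1 ∧
          p.1.2 = {q.1.1, k} ∧ q.1.2 = {p.1.1, k})) ∧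
    (∀ p q w : UVert m 3,
      (Ugraph m 3).Adj p q → (Ugraph m 3).Adj q w → (Ugraph m 3).Adj p w →
      ∃ i j k : Fin m, i ≠ j ∧ i ≠ k ∧ j ≠ k ∧
        ({p.1, q.1, w.1} : Set (Fin m × Finset (Fin m))) =
          {(i, {j, k}), (j, {i, k}), (k, {i, j})}) := by
  refine ⟨fun p q hpq => Ugraph.exists_common_neighbor_iff hpq, fun p q w hpq hqw hpw => ?_⟩
  obtain ⟨hp, hq, hw⟩ := Ugraph.triangle_eq hpq hqw hpw
  refine ⟨p.1.1, q.1.1, w.1.1, Ugraph.fst_ne_of_adj hpq, Ugraph.fst_ne_of_adj hpw,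
    Ugraph.fst_ne_of_adj hqw, ?_⟩
  rw [hp, hq, hw]

/-- An edge of `U(m,3)` joining `(i,A)` and `(j,B)` lies in a triangle of `U(m,3)` iff
there is `k ∈ [m]`, distinct from `i` and `j`, with `A = {j,k}` and `B = {i,k}`;
moreover every triangle of `U(m,3)` has vertex set
`{(i,{j,k}), (j,{i,k}), (k,{i,j})}` for some distinct `i,j,k ∈ [m]`. -/
theorem triangle_edges_of_U (m : ℕ) (hm : 3 ≤ m) :
    (∀ p q : UVert m 3, (Ugraph m 3).Adj p q →
      ((∃ w : UVert m 3, (Ugraph m 3).Adj p w ∧ (Ugraph m 3).Adj q w) ↔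
        ∃ k : Fin m, k ≠ p.1.1 ∧ k ≠ q.1.1 ∧
          p.1.2 = {q.1.1, k} ∧ q.1.2 = {p.1.1, k})) ∧
    (∀ p q w : UVert m 3,
      (Ugraph m 3).Adj p q → (Ugraph m 3).Adj q w → (Ugraph m 3).Adj p w →
      ∃ i j k : Fin m, i ≠ j ∧ i ≠ k ∧ j ≠ k ∧
        ({p.1, q.1, w.1} : Set (Fin m × Finset (Fin m))) =
          {(i, {j, k}), (j, {i, k}), (k, {i, j})}) :=
  triangle_edges_of_U_general m
end

section
/- Let m ≥ r ≥ 1 be integers. A graph G admits a local r-coloring using at most m colors if and only if there exists a graph homomorphism from G to U(m,r). -/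
theorem Set.exists_finset_superset_card_eq_of_notMem {α : Type*} [Fintype α] {s : Set α} {a : α}
    {k : ℕ} (ha : a ∉ s) (hs : s.ncard ≤ k) (hk : k ≤ Fintype.card α - 1) :
    ∃ A : Finset α, s ⊆ A ∧ a ∉ A ∧ A.card = k := by
  classical
  obtain ⟨A, hsA, hAa, hA⟩ := Finset.exists_subsuperset_card_eq (t := {a}ᶜ) (n := k)
    (s := s.toFinset) (by simpa using ha) (by rwa [← Set.ncard_eq_toFinset_card'])
    (by rwa [Finset.card_compl, Finset.card_singleton])
  exact ⟨A, by simpa using hsA, by simpa using @hAa a, hA⟩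

namespace Ugraph

variable {m r : ℕ} {V : Type} {G : SimpleGraph V}

theorem naturalColoring_ne_of_adj {p q : UVert m r} (h : (Ugraph m r).Adj p q) :
    naturalColoring m r p ≠ naturalColoring m r q :=
  fun he => q.2.1 (by rw [← show p.1.1 = q.1.1 from he]; exact h.1)

theorem image_neighborSet_subset (f : G →g Ugraph m r) (v : V) :
    (naturalColoring m r ∘ f) '' G.neighborSet v ⊆ (f v).1.2 := by
  rintro _ ⟨u, hu, rfl⟩
  exact (f.map_adj hu).2

theorem ncard_image_neighborSet_le (f : G →g Ugraph m r) (v : V) :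
    ((naturalColoring m r ∘ f) '' G.neighborSet v).ncard ≤ r - 1 :=
  calc _ ≤ ((f v).1.2 : Set (Fin m)).ncard := Set.ncard_le_ncard (image_neighborSet_subset f v)
    _ = r - 1 := by rw [Set.ncard_coe_finset, (f v).2.2]

theorem nonempty_hom_of_local_coloring (hrm : r ≤ m) (c : V → Fin m)
    (hc : ∀ u v, G.Adj u v → c u ≠ c v) (hloc : ∀ v, (c '' G.neighborSet v).ncard ≤ r - 1) :
    Nonempty (G →g Ugraph m r) := by
  have hext (v : V) : ∃ A : Finset (Fin m), c '' G.neighborSet v ⊆ A ∧ c v ∉ A ∧ A.card = r - 1 :=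
    Set.exists_finset_superset_card_eq_of_notMem (fun ⟨u, hu, he⟩ => hc v u hu he.symm) (hloc v)
      (by simp only [Fintype.card_fin]; omega)
  choose A hsub hnotMem hcard using hext
  exact ⟨⟨fun v => ⟨(c v, A v), hnotMem v, hcard v⟩, fun {u v} huv =>
    ⟨hsub v ⟨u, huv.symm, rfl⟩, hsub u ⟨v, huv, rfl⟩⟩⟩⟩

end Ugraph

theorem local_coloring_iff_hom_to_U_general (m r : ℕ) (hrm : r ≤ m)
    (V : Type) (G : SimpleGraph V) :
    (∃ c : V → Fin m,
        (∀ u v : V, G.Adj u v → c u ≠ c v) ∧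
        ∀ v : V, (c '' G.neighborSet v).ncard ≤ r - 1) ↔
    Nonempty (G →g Ugraph m r) := by
  constructor
  · rintro ⟨c, hc, hloc⟩
    exact Ugraph.nonempty_hom_of_local_coloring hrm c hc hloc
  · rintro ⟨f⟩
    exact ⟨naturalColoring m r ∘ f, fun u v huv => Ugraph.naturalColoring_ne_of_adj (f.map_adj huv),
      Ugraph.ncard_image_neighborSet_le f⟩

/-- A graph `G` admits a local `r`-coloring using at most `m` colors if and only if
there is a graph homomorphism from `G` to `U(m,r)`. -/
theorem local_coloring_iff_hom_to_U (m r : ℕ) (hr : 1 ≤ r) (hrm : r ≤ m)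
    (V : Type) (G : SimpleGraph V) :
    (∃ c : V → Fin m,
        (∀ u v : V, G.Adj u v → c u ≠ c v) ∧
        ∀ v : V, (c '' G.neighborSet v).ncard ≤ r - 1) ↔
    Nonempty (G →g Ugraph m r) :=
  local_coloring_iff_hom_to_U_general m r hrm V G
end
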